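/- Let A_1, …, A_n be events in a probability space with n ≥ 3. Then Pr(⋃_{i=1}^n A_i) ≥ (1/(n−2)) · ( Σ_{i=1}^n Pr(A_i) − ((2n−3)/C(n,2)) · Σ_{1≤i<j≤n} Pr(A_i ∩ A_j) + (3/C(n,2)) · Σ_{1≤i<j<k≤n} Pr(A_i ∩ A_j ∩ A_k) ), where C(n,2) = n(n−1)/2 is the binomial coefficient. -/

import Mathlib

/-!
Integrate a pointwise inequality between indicators. If `ω` lies in exactly `m` of the events,
the integrand on the right is `m - c₂ C(m,2) + c₃ C(m,3)` with `c₂ = (2n-3)/C(n,2)` and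
`c₃ = 3/C(n,2)`, and the indicator of the union is `[m ≥ 1]`. Clearing `C(n,2)`, the gap
`(n - 2) - (m - c₂ C(m,2) + c₃ C(m,3))` equals
`(n(n-1)(n-3) - (m-1)(n-1-m)(n-m)) / (n(n-1))`, which is nonnegative for integers
`1 ≤ m ≤ n`: the cubic vanishes at `m = n-1` and `m = n`, is nonpositive beyond `n-1`, and below
it each factor is dominated by the corresponding factor of `(n-3)(n-1)n`.
-/

open MeasureTheory Finset

section Counting

variable {α : Type*} [LinearOrder α] {a : α} {s : Finset α}

theorem filter_lt_insert_self_of_forall_lt (ha : ∀ x ∈ s, x < a) :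
    {j ∈ insert a s | a < j} = ∅ := by
  simpa using fun x hx => (ha x hx).le

theorem card_filter_lt_insert_of_forall_lt (ha : ∀ x ∈ s, x < a) {i : α} (hi : i ∈ s) :
    #{j ∈ insert a s | i < j} = #{j ∈ s | i < j} + 1 := by
  rw [filter_insert, if_pos (ha i hi),
    card_insert_of_notMem fun h => (ha a (mem_filter.1 h).1).false]

theorem sum_card_filter_lt_eq_choose_two (s : Finset α) :
    ∑ i ∈ s, #{j ∈ s | i < j} = (#s).choose 2 := by
  induction s using Finset.induction_on_max with
  | empty => simp
  | insert a s ha ih =>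
    have ha' : a ∉ s := fun h => (ha a h).false
    rw [sum_insert ha', card_insert_of_notMem ha', Nat.choose_succ_succ', ← ih,
      Nat.choose_one_right, filter_lt_insert_self_of_forall_lt ha,
      sum_congr rfl fun i hi => card_filter_lt_insert_of_forall_lt ha hi, sum_add_distrib,
      card_eq_sum_ones s]
    simp [add_comm]

theorem sum_sum_card_filter_lt_eq_choose_three (s : Finset α) :
    ∑ i ∈ s, ∑ j ∈ s with i < j, #{k ∈ s | j < k} = (#s).choose 3 := by
  induction s using Finset.induction_on_max with
  | empty => simp
  | insert a s ha ih =>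
    have ha' : a ∉ s := fun h => (ha a h).false
    rw [sum_insert ha', card_insert_of_notMem ha', Nat.choose_succ_succ', ← ih,
      ← sum_card_filter_lt_eq_choose_two, filter_lt_insert_self_of_forall_lt ha, sum_empty,
      zero_add, ← sum_add_distrib]
    refine sum_congr rfl fun i hi => ?_
    rw [filter_insert, if_pos (ha i hi), sum_insert fun h => (ha a (mem_filter.1 h).1).false,
      filter_lt_insert_self_of_forall_lt ha, card_empty, zero_add, card_eq_sum_ones,
      ← sum_add_distrib]
    refine sum_congr rfl fun j hj => ?_
    rw [card_filter_lt_insert_of_forall_lt ha (mem_filter.1 hj).1, add_comm]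

end Counting

theorem Nat.cast_choose_three {K : Type*} [Field K] [CharZero K] (m : ℕ) :
    (m.choose 3 : K) = m * (m - 1) * (m - 2) / 6 := by
  induction m with
  | zero => simp
  | succ m ih =>
    rw [Nat.choose_succ_succ, Nat.cast_add, ih, Nat.cast_choose_two]
    push_cast
    ring

section Indicators

variable {Ω ι : Type*} [Fintype ι] [LinearOrder ι] {A : ι → Set Ω} {ω : Ω} {S : Finset ι}

theorem sum_indicator_one_apply_eq_card (hS : ∀ i, ω ∈ A i ↔ i ∈ S) :
    ∑ i, (A i).indicator (1 : Ω → ℝ) ω = #S := by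
  classical
  simp [Set.indicator_apply, hS]

theorem sum_indicator_inter_one_apply_eq_choose_two (hS : ∀ i, ω ∈ A i ↔ i ∈ S) :
    ∑ i, ∑ j with i < j, (A i ∩ A j).indicator (1 : Ω → ℝ) ω = (#S).choose 2 := by
  classical
  rw [← sum_card_filter_lt_eq_choose_two]
  simp [Set.indicator_apply, hS, ite_and, filter_inter]

theorem sum_indicator_inter_inter_one_apply_eq_choose_three (hS : ∀ i, ω ∈ A i ↔ i ∈ S) :
    ∑ i, ∑ j with i < j, ∑ k with j < k, (A i ∩ A j ∩ A k).indicator (1 : Ω → ℝ) ω =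
      (#S).choose 3 := by
  classical
  rw [← sum_sum_card_filter_lt_eq_choose_three]
  simp [Set.indicator_apply, hS, ite_and, filter_inter]

end Indicators

theorem kwerel_weight_le {n m : ℕ} (hn : 3 ≤ n) (hm : 1 ≤ m) (hmn : m ≤ n) :
    (m : ℝ) - (2 * (n : ℝ) - 3) / (n.choose 2 : ℝ) * (m.choose 2 : ℝ) +
      3 / (n.choose 2 : ℝ) * (m.choose 3 : ℝ) ≤ (n : ℝ) - 2 := by
  have hn' : (3 : ℝ) ≤ n := by exact_mod_cast hn
  have hm' : (1 : ℝ) ≤ m := by exact_mod_cast hm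
  have hmn' : (m : ℝ) ≤ n := by exact_mod_cast hmn
  have hcubic : ((m : ℝ) - 1) * (n - 1 - m) * (n - m) ≤ (n - 3) * (n - 1) * n := by
    rcases le_or_gt (m + 2) n with hm2 | hm2
    · have hm2' : (m : ℝ) + 2 ≤ n := by exact_mod_cast hm2
      exact mul_le_mul (mul_le_mul (by linarith) (by linarith) (by linarith) (by linarith))
        (by linarith) (by linarith) (mul_nonneg (by linarith) (by linarith))
    · have hm1 : (n : ℝ) ≤ m + 1 := by exact_mod_cast (by omega : n ≤ m + 1)
      have hneg : ((m : ℝ) - 1) * (n - 1 - m) * (n - m) ≤ 0 :=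
        mul_nonpos_of_nonpos_of_nonneg
          (mul_nonpos_of_nonneg_of_nonpos (by linarith) (by linarith)) (by linarith)
      have hpos : 0 ≤ ((n : ℝ) - 3) * (n - 1) * n :=
        mul_nonneg (mul_nonneg (by linarith) (by linarith)) (by linarith)
      linarith
  have hN : (0 : ℝ) < n * (n - 1) := by nlinarith
  rw [Nat.cast_choose_two, Nat.cast_choose_two, Nat.cast_choose_three, ← sub_nonneg]
  have hgap : (n : ℝ) - 2 - ((m : ℝ) - (2 * n - 3) / (n * (n - 1) / 2) * (m * (m - 1) / 2) +
      3 / (n * (n - 1) / 2) * (m * (m - 1) * (m - 2) / 6)) =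
      ((n - 3) * (n - 1) * n - (m - 1) * (n - 1 - m) * (n - m)) / (n * (n - 1)) := by
    have : (n : ℝ) - 1 ≠ 0 := by linarith
    have : (n : ℝ) ≠ 0 := by linarith
    field_simp
    ring
  rw [hgap]
  exact div_nonneg (by linarith) hN.le

section Integrals

variable {Ω κ : Type*} [MeasurableSpace Ω] (μ : Measure Ω) [IsFiniteMeasure μ]
  {B : κ → Set Ω}

theorem integrable_sum_indicator_one (hB : ∀ t, MeasurableSet (B t)) (s : Finset κ) :
    Integrable (fun ω => ∑ t ∈ s, (B t).indicator (1 : Ω → ℝ) ω) μ :=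
  integrable_finsetSum _ fun t _ => (integrable_const 1).indicator (hB t)

theorem integral_sum_indicator_one (hB : ∀ t, MeasurableSet (B t)) (s : Finset κ) :
    ∫ ω, ∑ t ∈ s, (B t).indicator (1 : Ω → ℝ) ω ∂μ = ∑ t ∈ s, μ.real (B t) := by
  rw [integral_finsetSum _ fun t _ => (integrable_const 1).indicator (hB t)]
  exact sum_congr rfl fun t _ => integral_indicator_one (hB t)

end Integrals

theorem kwerel_indicator_le {Ω : Type*} {n : ℕ} (hn : 3 ≤ n) (A : Fin n → Set Ω) (ω : Ω) :
    ∑ i, (A i).indicator (1 : Ω → ℝ) ω -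
        (2 * (n : ℝ) - 3) / (n.choose 2 : ℝ) *
          ∑ i, ∑ j with i < j, (A i ∩ A j).indicator (1 : Ω → ℝ) ω +
        3 / (n.choose 2 : ℝ) *
          ∑ i, ∑ j with i < j, ∑ k with j < k, (A i ∩ A j ∩ A k).indicator (1 : Ω → ℝ) ω ≤
      ((n : ℝ) - 2) * (⋃ i, A i).indicator 1 ω := by
  classical
  set S : Finset (Fin n) := {i | ω ∈ A i}
  have hS : ∀ i, ω ∈ A i ↔ i ∈ S := by simp [S]
  rw [sum_indicator_one_apply_eq_card hS, sum_indicator_inter_one_apply_eq_choose_two hS,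
    sum_indicator_inter_inter_one_apply_eq_choose_three hS]
  by_cases hω : ω ∈ ⋃ i, A i
  · obtain ⟨i, hi⟩ := Set.mem_iUnion.1 hω
    rw [Set.indicator_of_mem hω, Pi.one_apply, mul_one]
    exact kwerel_weight_le hn (card_pos.2 ⟨i, (hS i).1 hi⟩) (by simpa using card_le_univ S)
  · have hS₀ : S = ∅ :=
      eq_empty_of_forall_notMem fun i hi => hω (Set.mem_iUnion.2 ⟨i, (hS i).2 hi⟩)
    simp [Set.indicator_of_notMem hω, hS₀]

theorem kwerel_lower_analogue_deg3 {Ω : Type*} [MeasurableSpace Ω]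
    (μ : Measure Ω) [IsProbabilityMeasure μ] (n : ℕ) (hn : 3 ≤ n)
    (A : Fin n → Set Ω) (hA : ∀ i, MeasurableSet (A i)) :
    (μ (⋃ i, A i)).toReal ≥
      (1 / ((n : ℝ) - 2)) *
        (∑ i, (μ (A i)).toReal -
          ((2 * (n : ℝ) - 3) / (n.choose 2 : ℝ)) *
            (∑ i, ∑ j ∈ univ.filter (fun j => i < j), (μ (A i ∩ A j)).toReal) +
          (3 / (n.choose 2 : ℝ)) *
            ∑ i, ∑ j ∈ univ.filter (fun j => i < j),
              ∑ k ∈ univ.filter (fun k => j < k), (μ (A i ∩ A j ∩ A k)).toReal) := by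
  let T : Fin n → Finset (Fin n) := fun i => {j | i < j}
  have hA₂ : ∀ x : (_ : Fin n) × Fin n, MeasurableSet (A x.1 ∩ A x.2) :=
    fun x => (hA x.1).inter (hA x.2)
  have hA₃ : ∀ x : (_ : Fin n) × (_ : Fin n) × Fin n,
      MeasurableSet (A x.1 ∩ A x.2.1 ∩ A x.2.2) :=
    fun x => ((hA x.1).inter (hA x.2.1)).inter (hA x.2.2)
  have hU : MeasurableSet (⋃ i, A i) := .iUnion hA
  have h₁ := integrable_sum_indicator_one μ hA univ
  have h₂ := integrable_sum_indicator_one μ hA₂ (univ.sigma T)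
  have h₃ := integrable_sum_indicator_one μ hA₃ (univ.sigma fun i => (T i).sigma T)
  have i₂ := integral_sum_indicator_one μ hA₂ (univ.sigma T)
  have i₃ := integral_sum_indicator_one μ hA₃ (univ.sigma fun i => (T i).sigma T)
  simp only [sum_sigma, T] at h₂ h₃ i₂ i₃
  have hmono := integral_mono ((h₁.sub (h₂.const_mul _)).add (h₃.const_mul _))
    (((integrable_const 1).indicator hU).const_mul _) (kwerel_indicator_le hn A)
  rw [integral_add' (h₁.sub (h₂.const_mul _)) (h₃.const_mul _),
    integral_sub' h₁ (h₂.const_mul _)] at hmono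
  simp only [integral_const_mul, integral_sum_indicator_one μ hA, i₂, i₃,
    integral_indicator_one hU] at hmono
  have hn₂ : (0 : ℝ) < n - 2 := sub_pos.2 (by exact_mod_cast hn)
  rw [ge_iff_le, one_div, inv_mul_le_iff₀ hn₂]
  simpa only [measureReal_def] using hmono
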